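/- If A is a solvable skew left brace and M is a maximal ideal of A, then A⁽²⁾ ⊆ M; in particular A⁽²⁾ ⊆ Rad(A) and M is not a prime ideal. -/
import Mathlib


/-- A skew left brace: `(A,+)` and `(A,∘)` (written `*`) are groups with
`a ∘ (b + c) = a ∘ b - a + a ∘ c`. -/
class SkewBrace (A : Type*) extends AddGroup A, Group A where
  compat : ∀ a b c : A, a * (b + c) = a * b + (-a + a * c)

namespace SkewBrace

variable {A : Type*}

/-- `λ_a (b) = -a + a ∘ b`. -/
def lam [SkewBrace A] (a b : A) : A := -a + a * b

/-- `a * b = λ_a(b) - b = -a + a∘b - b` (the brace star operation). -/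
def star [SkewBrace A] (a b : A) : A := -a + a * b - b

/-- An ideal of a skew left brace: a subgroup of `(A,+)`, normal in `(A,+)` and
`(A,∘)`, and invariant under all `λ_a`. -/
structure Ideal (A : Type*) [SkewBrace A] where
  carrier : Set A
  zero_mem : (0 : A) ∈ carrier
  add_mem : ∀ ⦃a b : A⦄, a ∈ carrier → b ∈ carrier → a + b ∈ carrier
  neg_mem : ∀ ⦃a : A⦄, a ∈ carrier → -a ∈ carrier
  add_conj_mem : ∀ (a : A) ⦃b : A⦄, b ∈ carrier → a + b + -a ∈ carrier
  mul_conj_mem : ∀ (a : A) ⦃b : A⦄, b ∈ carrier → a * b * a⁻¹ ∈ carrier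
  lam_mem : ∀ (a : A) ⦃b : A⦄, b ∈ carrier → lam a b ∈ carrier

/-- The ideal generated by a set, as a set. -/
def genIdeal [SkewBrace A] (S : Set A) : Set A :=
  {x | ∀ I : Ideal A, S ⊆ I.carrier → x ∈ I.carrier}

/-- A maximal ideal: a proper ideal such that the only ideals containing it are
itself and the whole brace. -/
def Ideal.IsMaximal [SkewBrace A] (M : Ideal A) : Prop :=
  M.carrier ≠ Set.univ ∧
    ∀ J : Ideal A, M.carrier ⊆ J.carrier → J.carrier = M.carrier ∨ J.carrier = Set.univ

/-- The radical: the intersection of all maximal ideals (the whole brace if there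
are none). -/
def radical (A : Type*) [SkewBrace A] : Set A :=
  {x | ∀ M : Ideal A, M.IsMaximal → x ∈ M.carrier}

/-- The set of all elements `a * b` (star). -/
def starSet (A : Type*) [SkewBrace A] : Set A := {x | ∃ a b : A, star a b = x}

/-- `A⁽²⁾` as the ideal generated by all `a * b`. -/
def sq (A : Type*) [SkewBrace A] : Set A := genIdeal (starSet A)

/-- `A⁽²⁾` as the additive subgroup generated by all `a * b`. -/
def sqAdd (A : Type*) [SkewBrace A] : Set A := (AddSubgroup.closure (starSet A) : Set A)

open scoped Classical in
/-- The weight of a skew left brace: the minimal number of elements generating it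
as an ideal (with `ω(0) = 1` by convention). -/
noncomputable def weight (A : Type*) [SkewBrace A] : ℕ∞ :=
  if Subsingleton A then 1
  else ⨅ (S : Finset A) (_ : genIdeal (S : Set A) = Set.univ), (S.card : ℕ∞)

/-- Artinian: every descending chain of ideals is eventually stationary. -/
def IsArtinian (A : Type*) [SkewBrace A] : Prop :=
  ∀ f : ℕ → Ideal A, (∀ n, (f (n + 1)).carrier ⊆ (f n).carrier) →
    ∃ N, ∀ n, N ≤ n → (f n).carrier = (f N).carrier

/-- A homomorphism of skew left braces. -/
structure BraceHom (A B : Type*) [SkewBrace A] [SkewBrace B] where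
  toFun : A → B
  map_add' : ∀ x y, toFun (x + y) = toFun x + toFun y
  map_mul' : ∀ x y, toFun (x * y) = toFun x * toFun y

/-- The kernel of a brace homomorphism. -/
def BraceHom.ker {A B : Type*} [SkewBrace A] [SkewBrace B] (f : BraceHom A B) : Set A :=
  {a | f.toFun a = 0}

/-- The socle `Soc(A) = Ker λ ∩ Z(A,+)`. -/
def Soc (A : Type*) [SkewBrace A] : Set A :=
  {a | (∀ b : A, lam a b = b) ∧ ∀ b : A, a + b = b + a}

/-- The annihilator `Ann(A) = Soc(A) ∩ Z(A,∘)`. -/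
def ann (A : Type*) [SkewBrace A] : Set A :=
  {a | (∀ b : A, lam a b = b) ∧ (∀ b : A, a + b = b + a) ∧ (∀ b : A, a * b = b * a)}

/-- A simple skew left brace: it has exactly two ideals, `0` and itself. -/
def IsSimple (A : Type*) [SkewBrace A] : Prop :=
  (∃ x y : A, x ≠ y) ∧ ∀ I : Ideal A, I.carrier = {(0 : A)} ∨ I.carrier = Set.univ

/-- A prime ideal `P`: the quotient `A/P` is a prime brace; internally, for all
ideals `I, J ⊇ P` with `I * J ⊆ P`, one of `I, J` equals `P`. -/
def Ideal.IsPrime [SkewBrace A] (P : Ideal A) : Prop :=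
  ∀ I J : Ideal A, P.carrier ⊆ I.carrier → P.carrier ⊆ J.carrier →
    (∀ i ∈ I.carrier, ∀ j ∈ J.carrier, star i j ∈ P.carrier) →
    I.carrier ⊆ P.carrier ∨ J.carrier ⊆ P.carrier

end SkewBrace

namespace SkewBrace

/-- The series `A₁ = A`, `A_{i+1} = A_i * A_i`. -/
def derSeries (A : Type*) [SkewBrace A] : ℕ → Set A
  | 0 => Set.univ
  | n + 1 => genIdeal {x | ∃ a ∈ derSeries A n, ∃ b ∈ derSeries A n, star a b = x}

/-- A solvable skew left brace: `A_n = 0` for some `n`. -/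
def IsSolvable (A : Type*) [SkewBrace A] : Prop :=
  ∃ n, derSeries A n = {(0 : A)}

section Aux

variable {A : Type*} [SkewBrace A]

lemma mul_zero'' (a : A) : a * (0 : A) = a := by
  have h := compat a (0 : A) 0
  rw [add_zero] at h
  have h2 : a * 0 + 0 = a * 0 + (-a + a * 0) := by rw [add_zero]; exact h
  have h3 := add_left_cancel h2
  exact (neg_add_eq_zero.mp h3.symm).symm

lemma mul_neg'' (a b : A) : a * (-b) = a + (-(a * b) + a) := by
  have h := compat a (-b) b
  rw [neg_add_cancel, mul_zero''] at h
  -- h : a = a * (-b) + (-a + a * b)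
  have h2 := eq_sub_of_add_eq h.symm
  rw [h2, sub_eq_add_neg, neg_add_rev, neg_neg]

lemma lam_mul' (a b c : A) : lam a (lam b c) = lam (a * b) c := by
  unfold lam
  rw [compat, mul_neg'', mul_assoc]
  simp [add_assoc]

lemma one_eq_zero : (1 : A) = 0 := by
  have h := lam_mul' (1 : A) 1 (1 : A)
  rw [one_mul] at h
  unfold lam at h
  rw [one_mul, one_mul] at h
  -- h : -1 + (-1 + 1) = -1 + 1
  have := add_left_cancel h
  -- this : -1 + 1 = 1
  rw [neg_add_cancel] at this
  exact this.symm

lemma lam_add' (a b c : A) : lam a (b + c) = lam a b + lam a c := by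
  unfold lam; rw [compat, ← add_assoc]

lemma mul_eq_add_lam (a b : A) : a * b = a + lam a b := by
  unfold lam; rw [add_neg_cancel_left]

lemma lam_one' (b : A) : lam (1 : A) b = b := by
  unfold lam; rw [one_mul, one_eq_zero, neg_zero, zero_add]

lemma mul_lam_inv (i m : A) : i * lam i⁻¹ m = i + m := by
  rw [mul_eq_add_lam, lam_mul', mul_inv_cancel, lam_one']

lemma Ideal.mul_mem (I : Ideal A) {a b : A} (ha : a ∈ I.carrier) (hb : b ∈ I.carrier) :
    a * b ∈ I.carrier := by
  rw [mul_eq_add_lam]; exact I.add_mem ha (I.lam_mem a hb)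

lemma Ideal.inv_mem (I : Ideal A) {a : A} (ha : a ∈ I.carrier) : a⁻¹ ∈ I.carrier := by
  have h : a⁻¹ = lam a⁻¹ (-a) := by
    unfold lam
    rw [mul_neg'', inv_mul_cancel, one_eq_zero, neg_zero, zero_add]
    simp [add_assoc]
  rw [h]; exact I.lam_mem a⁻¹ (I.neg_mem ha)

/-- `genIdeal S` as an `Ideal`. -/
def genIdealIdeal (S : Set A) : Ideal A where
  carrier := genIdeal S
  zero_mem := fun I _ => I.zero_mem
  add_mem := fun _ _ ha hb I hS => I.add_mem (ha I hS) (hb I hS)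
  neg_mem := fun _ ha I hS => I.neg_mem (ha I hS)
  add_conj_mem := fun a _ hb I hS => I.add_conj_mem a (hb I hS)
  mul_conj_mem := fun a _ hb I hS => I.mul_conj_mem a (hb I hS)
  lam_mem := fun a _ hb I hS => I.lam_mem a (hb I hS)

lemma subset_genIdeal {S : Set A} : S ⊆ genIdeal S := fun _ hx I hS => hS hx

lemma genIdeal_subset {S : Set A} (I : Ideal A) (h : S ⊆ I.carrier) :
    genIdeal S ⊆ I.carrier := fun _ hx => hx I h

/-- The whole brace as an ideal. -/
def univIdeal (A : Type*) [SkewBrace A] : Ideal A where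
  carrier := Set.univ
  zero_mem := trivial
  add_mem := fun _ _ _ _ => trivial
  neg_mem := fun _ _ => trivial
  add_conj_mem := fun _ _ _ => trivial
  mul_conj_mem := fun _ _ _ => trivial
  lam_mem := fun _ _ _ => trivial

/-- Sum of two ideals. -/
def sumIdeal (I J : Ideal A) : Ideal A where
  carrier := {x | ∃ i ∈ I.carrier, ∃ j ∈ J.carrier, x = i + j}
  zero_mem := ⟨0, I.zero_mem, 0, J.zero_mem, (add_zero 0).symm⟩
  add_mem := by
    rintro _ _ ⟨i, hi, j, hj, rfl⟩ ⟨i', hi', j', hj', rfl⟩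
    refine ⟨i + (j + i' + -j), I.add_mem hi (I.add_conj_mem j hi'),
      j + j', J.add_mem hj hj', ?_⟩
    simp [add_assoc]
  neg_mem := by
    rintro _ ⟨i, hi, j, hj, rfl⟩
    have h := I.add_conj_mem (-j) (I.neg_mem hi)
    rw [neg_neg] at h
    exact ⟨-j + -i + j, h, -j, J.neg_mem hj, by simp [add_assoc]⟩
  add_conj_mem := by
    rintro a _ ⟨i, hi, j, hj, rfl⟩
    exact ⟨a + i + -a, I.add_conj_mem a hi, a + j + -a, J.add_conj_mem a hj,
      by simp [add_assoc]⟩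
  mul_conj_mem := by
    rintro a _ ⟨i, hi, j, hj, rfl⟩
    have h1 : a * (i + j) * a⁻¹ = (a * i * a⁻¹) * (a * lam i⁻¹ j * a⁻¹) := by
      rw [← mul_lam_inv i j]; group
    rw [h1, mul_eq_add_lam (a * i * a⁻¹)]
    exact ⟨_, I.mul_conj_mem a hi, _,
      J.lam_mem _ (J.mul_conj_mem a (J.lam_mem i⁻¹ hj)), rfl⟩
  lam_mem := by
    rintro a _ ⟨i, hi, j, hj, rfl⟩
    exact ⟨lam a i, I.lam_mem a hi, lam a j, J.lam_mem a hj, lam_add' a i j⟩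

lemma mem_sumIdeal_left {I J : Ideal A} {i : A} (hi : i ∈ I.carrier) :
    i ∈ (sumIdeal I J).carrier := ⟨i, hi, 0, J.zero_mem, (add_zero i).symm⟩

lemma mem_sumIdeal_right {I J : Ideal A} {j : A} (hj : j ∈ J.carrier) :
    j ∈ (sumIdeal I J).carrier := ⟨0, I.zero_mem, j, hj, (zero_add j).symm⟩

lemma star_coset {M : Ideal A} {m m' : A} (x y : A) (hm : m ∈ M.carrier)
    (hm' : m' ∈ M.carrier) :
    ∃ p q, p ∈ M.carrier ∧ q ∈ M.carrier ∧ star (x + m) (y + m') = p + star x y + q := by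
  have hμ : lam x⁻¹ m ∈ M.carrier := M.lam_mem _ hm
  have hν : lam y⁻¹ m' ∈ M.carrier := M.lam_mem _ hm'
  have hmul : (x + m) * (y + m') =
      x * y + lam (x * y) (y⁻¹ * lam x⁻¹ m * y * lam y⁻¹ m') := by
    rw [← mul_lam_inv x m, ← mul_lam_inv y m', ← mul_eq_add_lam]
    group
  have hμ2 : y⁻¹ * lam x⁻¹ m * y * lam y⁻¹ m' ∈ M.carrier := by
    have := M.mul_conj_mem y⁻¹ hμ
    rw [inv_inv] at this
    exact M.mul_mem this hν
  set m₂ := lam (x * y) (y⁻¹ * lam x⁻¹ m * y * lam y⁻¹ m') with hm₂def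
  have hm₂ : m₂ ∈ M.carrier := M.lam_mem _ hμ2
  refine ⟨-m, y + (m₂ + -m') + -y, M.neg_mem hm, M.add_conj_mem y
    (M.add_mem hm₂ (M.neg_mem hm')), ?_⟩
  simp only [star, sub_eq_add_neg]
  rw [hmul]
  simp [add_assoc, neg_add_rev]

/-- The terms of the derived series as ideals. -/
def derIdeal (A : Type*) [SkewBrace A] : ℕ → Ideal A
  | 0 => univIdeal A
  | n + 1 => genIdealIdeal {x | ∃ a ∈ derSeries A n, ∃ b ∈ derSeries A n, star a b = x}

lemma derIdeal_carrier (A : Type*) [SkewBrace A] (n : ℕ) :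
    (derIdeal A n).carrier = derSeries A n := by
  cases n <;> rfl

lemma sq_subset_of_maximal {A : Type*} [SkewBrace A] (hA : IsSolvable A)
    (M : Ideal A) (hM : M.IsMaximal) : sq A ⊆ M.carrier := by
  set J := sumIdeal (genIdealIdeal (starSet A)) M with hJdef
  have hMJ : M.carrier ⊆ J.carrier := fun z hz => mem_sumIdeal_right hz
  rcases hM.2 J hMJ with hJ | hJ
  · intro z hz
    rw [← hJ]
    exact mem_sumIdeal_left hz
  · exfalso
    have key : ∀ n, (sumIdeal (derIdeal A n) M).carrier = Set.univ := by
      intro n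
      induction n with
      | zero =>
        apply Set.eq_univ_of_forall
        intro z
        exact ⟨z, trivial, 0, M.zero_mem, (add_zero z).symm⟩
      | succ n ih =>
        apply Set.eq_univ_of_univ_subset
        rw [← hJ]
        rintro _ ⟨s, hs, m, hm, rfl⟩
        have hsub : genIdeal (starSet A) ⊆ (sumIdeal (derIdeal A (n + 1)) M).carrier := by
          apply genIdeal_subset
          rintro _ ⟨a, b, rfl⟩
          have ha : a ∈ (sumIdeal (derIdeal A n) M).carrier := ih ▸ trivial
          have hb : b ∈ (sumIdeal (derIdeal A n) M).carrier := ih ▸ trivial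
          obtain ⟨x, hx, m1, hm1, rfl⟩ := ha
          obtain ⟨y, hy, m2, hm2, rfl⟩ := hb
          obtain ⟨p, q, hp, hq, heq⟩ := star_coset (M := M) x y hm1 hm2
          rw [heq]
          have hxy : star x y ∈ (derIdeal A (n + 1)).carrier := by
            apply subset_genIdeal
            exact ⟨x, (derIdeal_carrier A n) ▸ hx, y, (derIdeal_carrier A n) ▸ hy, rfl⟩
          refine ⟨p + star x y + -p, (derIdeal A (n + 1)).add_conj_mem p hxy,
            p + q, M.add_mem hp hq, ?_⟩
          simp [add_assoc]
        exact (sumIdeal (derIdeal A (n + 1)) M).add_mem (hsub hs) (mem_sumIdeal_right hm)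
    obtain ⟨N, hN⟩ := hA
    apply hM.1
    apply Set.eq_univ_of_univ_subset
    rw [← key N]
    rintro _ ⟨s, hs, m, hm, rfl⟩
    rw [derIdeal_carrier, hN] at hs
    rw [Set.mem_singleton_iff.mp hs, zero_add]
    exact hm

end Aux

/-- if `A` is solvable and `M` is a maximal ideal then
`A⁽²⁾ ⊆ M`, so `M` is not prime; in particular `A⁽²⁾ ⊆ Rad(A)`. -/
theorem solvable_sq_subset_maximal (A : Type*) [SkewBrace A] (hA : IsSolvable A)
    (M : Ideal A) (hM : M.IsMaximal) :
    sq A ⊆ M.carrier ∧ ¬ M.IsPrime ∧ sq A ⊆ radical A := by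
  have hsq := sq_subset_of_maximal hA M hM
  refine ⟨hsq, ?_, fun x hx M' hM' => sq_subset_of_maximal hA M' hM' hx⟩
  intro hP
  have hstar : ∀ i ∈ (univIdeal A).carrier, ∀ j ∈ (univIdeal A).carrier,
      star i j ∈ M.carrier := fun i _ j _ => hsq (subset_genIdeal ⟨i, j, rfl⟩)
  rcases hP (univIdeal A) (univIdeal A) (fun _ _ => trivial) (fun _ _ => trivial) hstar with
    h | h
  all_goals
    exact hM.1 (Set.eq_univ_of_univ_subset h)

end SkewBrace
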